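/- arXiv:2210.11836 — 2 statements merged into one kernel-verified Lean document; each statement's English description precedes it below -/
import Mathlib

section
/- Let X be a type, let m be a natural number, and for each i = 1,…,m let L_i be a finite index set, h_i : X → (L_i → ℝ) a map, and α_i ≥ 0 a weight. Let d(x,y) := Σ_{i=1}^m (α_i/2) · Σ_{j ∈ L_i} |h_i(x)(j) − h_i(y)(j)|. Then for any σ² > 0 and l ≠ 0, the function K : X × X → ℝ defined by K(x,y) := σ² · exp(−d(x,y)/l²) is a positive semidefinite kernel on X: it is symmetric and for every n ∈ ℕ, every x₁,…,xₙ ∈ X and every c₁,…,cₙ ∈ ℝ, Σ_{i,j=1}^n c_i c_j K(x_i,x_j) ≥ 0. (This is the paper's Proposition 2: the Symbolical-Optimal-Transport kernel-kernel K_SOT is a proper p.s.d. kernel over the kernel-grammar generated kernel space.) -/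
/-!
Kernels `K` on `X` whose Gram matrices `(K (xᵢ) (xⱼ))ᵢⱼ` are all positive semidefinite are closed
under composition, nonnegative scaling and (by the Schur product theorem) finite products, so
`exp (-∑ Dᵢ)` is such a kernel as soon as every `exp (-Dᵢ)` is. The SOT kernel is
`σ² ∏ᵢ ∏ⱼ exp (-(αᵢ / (2 l²)) |hᵢ x j - hᵢ y j|)`, a product of Laplace kernels on `ℝ`, and the
Laplace kernel is `exp (-t |a - b|) = e^{-ta} min (e^{2ta}, e^{2tb}) e^{-tb}`, where
`min (u, v) = ⟪𝟙_(0,u], 𝟙_(0,v]⟫` in `L²(ℝ)` is a Gram kernel.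
-/

open Matrix MeasureTheory Set

def IsPosSemidefKernel {X : Type*} (K : X → X → ℝ) : Prop :=
  ∀ n (x : Fin n → X), (Matrix.of fun i j => K (x i) (x j)).PosSemidef

namespace IsPosSemidefKernel

variable {X Y : Type*} {K K' : X → X → ℝ}

theorem symm (hK : IsPosSemidefKernel K) (x y : X) : K x y = K y x := by
  simpa using ((hK 2 ![x, y]).isHermitian.apply 0 1).symm

theorem sum_mul_nonneg (hK : IsPosSemidefKernel K) {n : ℕ} (x : Fin n → X) (c : Fin n → ℝ) :
    0 ≤ ∑ i, ∑ j, c i * c j * K (x i) (x j) := by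
  simpa [dotProduct, mulVec, Finset.mul_sum, mul_comm, mul_left_comm, mul_assoc]
    using (hK n x).dotProduct_mulVec_nonneg c

theorem comp (hK : IsPosSemidefKernel K) (f : Y → X) :
    IsPosSemidefKernel fun x y => K (f x) (f y) :=
  fun n x => hK n (f ∘ x)

theorem const_mul (hK : IsPosSemidefKernel K) {a : ℝ} (ha : 0 ≤ a) :
    IsPosSemidefKernel fun x y => a * K x y :=
  fun n x => (hK n x).smul ha

theorem mul_mul_self (hK : IsPosSemidefKernel K) (f : X → ℝ) :
    IsPosSemidefKernel fun x y => f x * K x y * f y := by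
  intro n x
  convert (hK n x).conjTranspose_mul_mul_same (diagonal (f ∘ x)) using 1
  ext i j
  simp [diagonal_mul, mul_diagonal]

theorem mul (hK : IsPosSemidefKernel K) (hK' : IsPosSemidefKernel K') :
    IsPosSemidefKernel fun x y => K x y * K' x y :=
  fun n x => (hK n x).hadamard (hK' n x)

theorem one : IsPosSemidefKernel fun (_ _ : X) => (1 : ℝ) := by
  intro n x
  convert posSemidef_vecMulVec_self_star (1 : Fin n → ℝ) using 1
  ext i j
  simp [vecMulVec]

theorem prod {ι : Type*} (s : Finset ι) {K : ι → X → X → ℝ}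
    (hK : ∀ i ∈ s, IsPosSemidefKernel (K i)) :
    IsPosSemidefKernel fun x y => ∏ i ∈ s, K i x y := by
  classical
  induction s using Finset.induction with
  | empty => simpa using one
  | insert a s ha ih =>
    simp only [Finset.prod_insert ha]
    exact (hK a (s.mem_insert_self a)).mul (ih fun i hi => hK i (Finset.mem_insert_of_mem hi))

theorem exp_neg_sum {ι : Type*} (s : Finset ι) {D : ι → X → X → ℝ}
    (hD : ∀ i ∈ s, IsPosSemidefKernel fun x y => Real.exp (-D i x y)) :
    IsPosSemidefKernel fun x y => Real.exp (-∑ i ∈ s, D i x y) := by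
  simpa only [← Finset.sum_neg_distrib, Real.exp_sum] using prod s hD

end IsPosSemidefKernel

theorem isPosSemidefKernel_inner {X E : Type*} [NormedAddCommGroup E] [InnerProductSpace ℝ E]
    (f : X → E) : IsPosSemidefKernel fun x y => inner ℝ (f x) (f y) :=
  fun _ x => posSemidef_gram ℝ (f ∘ x)

theorem isPosSemidefKernel_min {X : Type*} {f : X → ℝ} (hf : ∀ x, 0 ≤ f x) :
    IsPosSemidefKernel fun x y => min (f x) (f y) := by
  let v : X → Lp ℝ 2 (volume : Measure ℝ) := fun x =>
    indicatorConstLp 2 (measurableSet_Ioc (a := 0) (b := f x)) measure_Ioc_lt_top.ne 1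
  have hv : ∀ x y, min (f x) (f y) = inner ℝ (v x) (v y) := fun x y => by
    rw [L2.inner_indicatorConstLp_one_indicatorConstLp_one _ _ measure_Ioc_lt_top.ne
      measure_Ioc_lt_top.ne, Ioc_inter_Ioc, max_self,
      Real.volume_real_Ioc_of_le (le_min (hf x) (hf y)), sub_zero, RCLike.ofReal_real_eq_id, id]
  simpa only [hv] using isPosSemidefKernel_inner v

theorem isPosSemidefKernel_exp_neg_mul_abs_sub {t : ℝ} (ht : 0 ≤ t) :
    IsPosSemidefKernel fun a b : ℝ => Real.exp (-(t * |a - b|)) := by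
  have hfactor : ∀ a b : ℝ, Real.exp (-(t * |a - b|)) =
      Real.exp (-(t * a)) * min (Real.exp (2 * t * a)) (Real.exp (2 * t * b)) *
        Real.exp (-(t * b)) := by
    intro a b
    rw [← Real.exp_monotone.map_min, ← Real.exp_add, ← Real.exp_add]
    congr 1
    rcases le_total a b with hab | hab
    · rw [min_eq_left (by nlinarith), abs_of_nonpos (by linarith)]; ring
    · rw [min_eq_right (by nlinarith), abs_of_nonneg (by linarith)]; ring
  simp only [hfactor]
  exact (isPosSemidefKernel_min fun a => (Real.exp_pos _).le).mul_mul_self _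

theorem sot_kernel_kernel_is_psd_general
    {X : Type*} (m : ℕ) (L : Fin m → Type*) [∀ i, Fintype (L i)]
    (h : ∀ i : Fin m, X → (L i → ℝ)) (α : Fin m → ℝ) (hα : ∀ i, 0 ≤ α i)
    (d : X → X → ℝ)
    (hd : ∀ x y, d x y = ∑ i : Fin m, (α i / 2) * ∑ j : L i, |h i x j - h i y j|)
    (σ2 l : ℝ) (hσ2 : 0 < σ2)
    (K : X → X → ℝ)
    (hK : ∀ x y, K x y = σ2 * Real.exp (-(d x y) / l ^ 2)) :
    (∀ x y, K x y = K y x) ∧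
      (∀ n : ℕ, ∀ x : Fin n → X, ∀ c : Fin n → ℝ,
        0 ≤ ∑ i : Fin n, ∑ j : Fin n, c i * c j * K (x i) (x j)) := by
  have hK_eq : K = fun x y =>
      σ2 * Real.exp (-∑ i, ∑ j, α i / 2 / l ^ 2 * |h i x j - h i y j|) := by
    funext x y
    rw [hK, hd, neg_div, Finset.sum_div]
    congr 3
    refine Finset.sum_congr rfl fun i _ => ?_
    rw [Finset.mul_sum, Finset.sum_div]
    exact Finset.sum_congr rfl fun j _ => by ring
  have hK_psd : IsPosSemidefKernel K := by
    rw [hK_eq]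
    refine .const_mul (.exp_neg_sum _ fun i _ => .exp_neg_sum _ fun j _ => ?_) hσ2.le
    have hw : 0 ≤ α i / 2 / l ^ 2 := by have := hα i; positivity
    exact (isPosSemidefKernel_exp_neg_mul_abs_sub hw).comp fun x => h i x j
  exact ⟨hK_psd.symm, fun _ => hK_psd.sum_mul_nonneg⟩

/-- Proposition 2: the SOT kernel-kernel `K(x,y) = σ² exp(−d(x,y)/l²)`, with `d`
the weighted-sum-of-L1 pseudometric over feature maps, is a positive semidefinite
kernel on `X`. -/
theorem sot_kernel_kernel_is_psd
    {X : Type*} (m : ℕ) (L : Fin m → Type*) [∀ i, Fintype (L i)]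
    (h : ∀ i : Fin m, X → (L i → ℝ)) (α : Fin m → ℝ) (hα : ∀ i, 0 ≤ α i)
    (d : X → X → ℝ)
    (hd : ∀ x y, d x y = ∑ i : Fin m, (α i / 2) * ∑ j : L i, |h i x j - h i y j|)
    (σ2 l : ℝ) (hσ2 : 0 < σ2) (hl : l ≠ 0)
    (K : X → X → ℝ)
    (hK : ∀ x y, K x y = σ2 * Real.exp (-(d x y) / l ^ 2)) :
    (∀ x y, K x y = K y x) ∧
      (∀ n : ℕ, ∀ x : Fin n → X, ∀ c : Fin n → ℝ,
        0 ≤ ∑ i : Fin n, ∑ j : Fin n, c i * c j * K (x i) (x j)) :=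
  sot_kernel_kernel_is_psd_general m L h α hα d hd σ2 l hσ2 K hK
end

section
/- Let X be a type and let K : X × X → ℝ be a positive semidefinite kernel on X. Then the pointwise exponential K'(x,y) := exp(K(x,y)) is a positive semidefinite kernel on X. -/
/-!
A kernel is positive semidefinite exactly when all its Gram matrices `(K (x i) (x j))ᵢⱼ` are. By the Schur
product theorem the entrywise powers of a positive semidefinite matrix are positive semidefinite,
and the entrywise exponential `∑ₖ A^{∘k} / k!` is a convergent sum of these with nonnegative
coefficients, so its quadratic form is a limit of nonnegative numbers.
-/

open Matrix
open scoped ComplexOrder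

namespace Matrix

theorem PosSemidef.map_pow {𝕜 ι : Type*} [RCLike 𝕜] [Finite ι] {A : Matrix ι ι 𝕜}
    (hA : A.PosSemidef) (k : ℕ) : (A.map (· ^ k)).PosSemidef := by
  induction k with
  | zero =>
    convert posSemidef_vecMulVec_self_star (1 : ι → 𝕜) using 1
    ext i j
    simp
  | succ k ih =>
    convert ih.hadamard hA using 1
    ext i j
    simp [pow_succ]

theorem dotProduct_mulVec_eq_sum_sum {ι : Type*} [Fintype ι] (A : Matrix ι ι ℝ) (c : ι → ℝ) :
    star c ⬝ᵥ (A *ᵥ c) = ∑ i, ∑ j, c i * c j * A i j := by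
  simp only [dotProduct, mulVec, star_trivial, Finset.mul_sum]
  exact Finset.sum_congr rfl fun i _ => Finset.sum_congr rfl fun j _ => by ring

theorem PosSemidef.map_exp {ι : Type*} [Fintype ι] {A : Matrix ι ι ℝ} (hA : A.PosSemidef) :
    (A.map Real.exp).PosSemidef := by
  refine .of_dotProduct_mulVec_nonneg (hA.isHermitian.map _ fun _ => rfl) fun c => ?_
  have hexp : ∀ a : ℝ, HasSum (fun k => a ^ k / k.factorial) (Real.exp a) := fun a => by
    simpa [Real.exp_eq_exp_ℝ] using NormedSpace.expSeries_div_hasSum_exp a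
  have hsum : HasSum (fun k => star c ⬝ᵥ (A.map (· ^ k) *ᵥ c) / k.factorial)
      (star c ⬝ᵥ (A.map Real.exp *ᵥ c)) := by
    simp only [dotProduct_mulVec_eq_sum_sum, Finset.sum_div, mul_div_assoc, map_apply]
    exact hasSum_sum fun i _ => hasSum_sum fun j _ => (hexp (A i j)).mul_left _
  exact hsum.nonneg fun k => div_nonneg ((hA.map_pow k).dotProduct_mulVec_nonneg c) (by positivity)

end Matrix

theorem posSemidef_kernel_iff {X : Type*} (K : X → X → ℝ) :
    ((∀ x y, K x y = K y x) ∧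
      ∀ n : ℕ, ∀ x : Fin n → X, ∀ c : Fin n → ℝ,
        0 ≤ ∑ i : Fin n, ∑ j : Fin n, c i * c j * K (x i) (x j)) ↔
      ∀ n : ℕ, ∀ x : Fin n → X, (Matrix.of fun i j => K (x i) (x j)).PosSemidef := by
  simp only [posSemidef_iff_dotProduct_mulVec, dotProduct_mulVec_eq_sum_sum, of_apply]
  refine ⟨fun ⟨hsymm, hpsd⟩ n x => ⟨?_, hpsd n x⟩, fun h => ⟨fun x y => ?_, fun n x => (h n x).2⟩⟩
  · ext i j
    exact hsymm (x j) (x i)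
  · simpa using ((h 2 ![x, y]).1.apply 0 1).symm

/-- The pointwise exponential of a positive semidefinite kernel is a positive
semidefinite kernel. -/
theorem psd_kernel_exp
    {X : Type*} (K : X → X → ℝ)
    (hsymm : ∀ x y, K x y = K y x)
    (hpsd : ∀ n : ℕ, ∀ x : Fin n → X, ∀ c : Fin n → ℝ,
      0 ≤ ∑ i : Fin n, ∑ j : Fin n, c i * c j * K (x i) (x j))
    (K' : X → X → ℝ) (hK' : ∀ x y, K' x y = Real.exp (K x y)) :
    (∀ x y, K' x y = K' y x) ∧
      (∀ n : ℕ, ∀ x : Fin n → X, ∀ c : Fin n → ℝ,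
        0 ≤ ∑ i : Fin n, ∑ j : Fin n, c i * c j * K' (x i) (x j)) := by
  obtain rfl : K' = fun x y => Real.exp (K x y) := funext₂ hK'
  refine (posSemidef_kernel_iff _).2 fun n x => ?_
  exact ((posSemidef_kernel_iff K).1 ⟨hsymm, hpsd⟩ n x).map_exp
end
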